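/- Let S = {A, B} and consider the programmed multiset rewriting system M = (X, M₀, ζ) with M₀ = ∅, X = {μ₁ : ∅ → {A}, μ₂ : ∅ → {B}, ε}, ζ(μ₁) = {μ₂} and ζ(μ₂) = {μ₁}. Then for every ordered multiset rewriting system M' over S, the set of runs of M differs from the set of runs of M'. Consequently, the inclusion of the generative power of ordered MRS in that of programmed MRS is strict. -/
import Mathlib


/-- A multiset over a set of elements `S`, given by multiplicities. -/
abbrev MSet (S : Type) := S → ℕ

/-- Submultiset relation (pointwise `≤`). -/
def MSub {S : Type} (A M : MSet S) : Prop := ∀ s, A s ≤ M s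

/-- A multiset rewriting rule `μ = (•μ, μ•)`. -/
abbrev Rule (S : Type) := MSet S × MSet S

/-- The empty rule `ε = (∅, ∅)`. -/
def epsRule (S : Type) : Rule S := (fun _ => 0, fun _ => 0)

/-- A rule is enabled at `M` when its left-hand side is a submultiset of `M`. -/
def Enabled {S : Type} (μ : Rule S) (M : MSet S) : Prop := MSub μ.1 M

/-- The multiset `(M \ •μ) ∪ μ•` obtained by applying a rule. -/
def ApplyRule {S : Type} (μ : Rule S) (M : MSet S) : MSet S :=
  fun s => M s - μ.1 s + μ.2 s

/-- A single rewriting step of the rule set `X`: the rule belongs to `X`,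
is enabled, produces `M'`, and the empty rule `ε` is applied only when no
other rule of `X` is enabled. -/
def MStep {S : Type} (X : Set (Rule S)) (M : MSet S) (μ : Rule S) (M' : MSet S) : Prop :=
  μ ∈ X ∧ Enabled μ M ∧ M' = ApplyRule μ M ∧
    (μ = epsRule S → ∀ ν ∈ X, ν ≠ epsRule S → ¬ Enabled ν M)

/-- A multiset rewriting system over `S`: a finite set of rules containing
the empty rule, together with an initial multiset. -/
structure MRS (S : Type) where
  X : Set (Rule S)
  finX : X.Finite
  M0 : MSet S
  eps_mem : epsRule S ∈ X

/-- `π` is a run of `M` with run label `lbl`, where `lbl i` is the rule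
applied in step `i + 1` (the paper's `π⃗[i+1]`, rewriting `π i` to `π (i+1)`). -/
def IsRunWith {S : Type} (M : MRS S) (π : ℕ → MSet S) (lbl : ℕ → Rule S) : Prop :=
  π 0 = M.M0 ∧ ∀ i, MStep M.X (π i) (lbl i) (π (i + 1))

/-- The semantics of an unregulated MRS: its set of runs (labels disregarded). -/
def runs {S : Type} (M : MRS S) : Set (ℕ → MSet S) :=
  { π | ∃ lbl, IsRunWith M π lbl }

/-- `ζ` is a strict partial order on rules. -/
def IsStrictOrderRel {S : Type} (ζ : Rule S → Rule S → Prop) : Prop :=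
  (∀ μ, ¬ ζ μ μ) ∧ ∀ a b c, ζ a b → ζ b c → ζ a c

/-- Runs of the ordered MRS `(X, M₀, ζ)`: for every `i > 0`,
it is not the case that `π⃗[i+1] < π⃗[i]`. -/
def orderedRuns {S : Type} (M : MRS S) (ζ : Rule S → Rule S → Prop) :
    Set (ℕ → MSet S) :=
  { π | ∃ lbl, IsRunWith M π lbl ∧ ∀ i, ¬ ζ (lbl (i + 1)) (lbl i) }

/-- Runs of the programmed MRS `(X, M₀, ζ)`: for every `i > 0`,
`π⃗[i+1] ∈ ζ (π⃗[i])`. -/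
def programmedRuns {S : Type} (M : MRS S) (ζ : Rule S → Set (Rule S)) :
    Set (ℕ → MSet S) :=
  { π | ∃ lbl, IsRunWith M π lbl ∧ ∀ i, lbl (i + 1) ∈ ζ (lbl i) }

/-- `μ₁ : ∅ → {A}` over `S = {A, B}` (`A = 0`, `B = 1`). -/
def mu1 : Rule (Fin 2) := (![0, 0], ![1, 0])

/-- `μ₂ : ∅ → {B}`. -/
def mu2 : Rule (Fin 2) := (![0, 0], ![0, 1])

/-- The MRS with `M₀ = ∅` and `X = {μ₁, μ₂, ε}`. -/
def Mprog : MRS (Fin 2) where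
  X := {mu1, mu2, epsRule (Fin 2)}
  finX := Set.toFinite _
  M0 := ![0, 0]
  eps_mem := by simp

/-- The successor function with `ζ(μ₁) = {μ₂}` and `ζ(μ₂) = {μ₁}`. -/
def zetaProg : Rule (Fin 2) → Set (Rule (Fin 2)) :=
  fun μ => { ν | (μ = mu1 ∧ ν = mu2) ∨ (μ = mu2 ∧ ν = mu1) }

lemma mu1_ne_eps : mu1 ≠ epsRule (Fin 2) := by
  intro h
  have := congrArg (fun r => r.2 0) h
  simp [mu1, epsRule] at this

lemma mu2_ne_eps : mu2 ≠ epsRule (Fin 2) := by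
  intro h
  have := congrArg (fun r => r.2 1) h
  simp [mu2, epsRule] at this

/-- The alternating run of the programmed system. -/
def altRun : ℕ → MSet (Fin 2) := fun i => ![(i + 1) / 2, i / 2]

lemma altRun_prog : altRun ∈ programmedRuns Mprog zetaProg := by
  refine ⟨fun i => if i % 2 = 0 then mu1 else mu2, ⟨?_, ?_⟩, ?_⟩
  · funext s; fin_cases s <;> rfl
  · intro i
    rcases Nat.even_or_odd i with ⟨k, hk⟩ | ⟨k, hk⟩
    · have h2 : i % 2 = 0 := by omega
      simp only [if_pos h2]
      refine ⟨by simp [Mprog], fun s => by fin_cases s <;> simp [mu1], ?_,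
        fun he => absurd he mu1_ne_eps⟩
      funext s; fin_cases s <;> simp [altRun, ApplyRule, mu1] <;> omega
    · have h2 : i % 2 ≠ 0 := by omega
      simp only [if_neg h2]
      refine ⟨by simp [Mprog], fun s => by fin_cases s <;> simp [mu2], ?_,
        fun he => absurd he mu2_ne_eps⟩
      funext s; fin_cases s <;> simp [altRun, ApplyRule, mu2] <;> omega
  · intro i
    rcases Nat.even_or_odd i with ⟨k, hk⟩ | ⟨k, hk⟩
    · have h2 : i % 2 = 0 := by omega
      have h3 : (i + 1) % 2 ≠ 0 := by omega
      simp [zetaProg, h2, h3]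
    · have h2 : i % 2 ≠ 0 := by omega
      have h3 : (i + 1) % 2 = 0 := by omega
      simp [zetaProg, h2, h3]

/-- For every ordered MRS `M'` over `S = {A, B}`, the set of runs of the
programmed MRS `(X, M₀, ζ)` above differs from the set of runs of `M'`:
the inclusion of ordered in programmed generative power is strict. -/
theorem programmed_not_subsumed_by_ordered :
    ∀ (M' : MRS (Fin 2)) (ζ' : Rule (Fin 2) → Rule (Fin 2) → Prop),
      IsStrictOrderRel ζ' → orderedRuns M' ζ' ≠ programmedRuns Mprog zetaProg := by
  intro M' ζ' hζ heq
  have hprog := altRun_prog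
  rw [← heq] at hprog
  obtain ⟨lbl, ⟨h0, hstep⟩, -⟩ := hprog
  obtain ⟨hmem, hen, happ, -⟩ := hstep 0
  set l := lbl 0 with hl
  -- left side of l is empty
  have hlhs : ∀ s, l.1 s = 0 := by
    intro s
    have := hen s
    have h0s : altRun 0 s = 0 := by fin_cases s <;> rfl
    omega
  -- right side of l is ![1, 0]
  have hrhs0 : l.2 0 = 1 := by
    have := congrFun happ (0 : Fin 2)
    simp [ApplyRule, altRun, hlhs] at this
    omega
  have hrhs1 : l.2 1 = 0 := by
    have := congrFun happ (1 : Fin 2)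
    simp [ApplyRule, altRun, hlhs] at this
    omega
  have hM0 : M'.M0 = fun _ => 0 := by
    rw [← h0]; funext s; fin_cases s <;> rfl
  -- the run applying l forever
  set π' : ℕ → MSet (Fin 2) := fun i s => i * l.2 s with hπ'
  have hord : π' ∈ orderedRuns M' ζ' := by
    refine ⟨fun _ => l, ⟨?_, ?_⟩, fun i => hζ.1 l⟩
    · rw [hM0]; funext s; simp [hπ']
    · intro i
      refine ⟨hmem, fun s => by simp [hlhs], ?_, ?_⟩
      · funext s; simp [hπ', ApplyRule, hlhs]; ring
      · intro he
        exact absurd (congrArg (fun r => r.2 0) he) (by simp [epsRule, hrhs0])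
  rw [heq] at hord
  obtain ⟨L, ⟨hL0, hLstep⟩, hLζ⟩ := hord
  -- compute π' 2 at coordinate 1 via the programmed constraints
  have hv : π' 2 1 = 0 := by simp [hπ', hrhs1]
  obtain ⟨-, -, ha1, -⟩ := hLstep 0
  obtain ⟨-, -, ha2, -⟩ := hLstep 1
  have hz := hLζ 0
  have hπ0 : π' 0 = ![0, 0] := by rw [hL0]; rfl
  rcases hz with ⟨hL0eq, hL1eq⟩ | ⟨hL0eq, hL1eq⟩ <;>
  · rw [hL0eq] at ha1; rw [hL1eq] at ha2
    have := congrFun ha2 (1 : Fin 2)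
    rw [ha1, hπ0] at this
    simp [ApplyRule, mu1, mu2] at this
    rw [hv] at this
    simp at this
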